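/- arXiv:2605.12690 — 7 statements merged into one kernel-verified Lean document; each statement's English description precedes it below -/
import Mathlib

section
/- Let A be a densely defined maximal dissipative linear operator on a real Hilbert space H. Define B := ((-A+I)(-A*+I))^{-1} = (-A*+I)^{-1}(-A+I)^{-1}. Then B is a bounded, self-adjoint, strictly positive operator satisfying -A*B + B ≥ 0 (i.e., the weak B-condition holds with constant c₀ = 1). -/
open scoped RealInnerProductSpace

/-- Let `A` be a densely defined maximal dissipative linear operator on a real
Hilbert space `H`. Let `R = (-A+I)⁻¹` and `R' = (-A*+I)⁻¹` be the (bounded) inverses of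
`-A+I` and `-A*+I` respectively, and set `B := R' ∘ R = ((-A+I)(-A*+I))⁻¹`. Then `B` is a
bounded, self-adjoint, strictly positive operator satisfying `-A*B + B ≥ 0`, i.e. the weak
`B`-condition holds with constant `c₀ = 1`. -/
theorem statement_0
    {H : Type*} [NormedAddCommGroup H] [InnerProductSpace ℝ H] [CompleteSpace H]
    (A : H →ₗ.[ℝ] H)
    (hdense : Dense (A.domain : Set H))
    (hdiss : ∀ x : A.domain, ⟪A x, (x : H)⟫ ≤ 0)
    (R R' : H →L[ℝ] H)
    -- `R` is the inverse of `-A + I` (maximal dissipativity: `-A + I` is onto with bounded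
    -- inverse)
    (hR_mem : ∀ y : H, R y ∈ A.domain)
    (hR_right : ∀ y : H, R y - A ⟨R y, hR_mem y⟩ = y)
    (hR_left : ∀ x : A.domain, R ((x : H) - A x) = (x : H))
    -- `R'` is the inverse of `-A* + I`
    (hR'_mem : ∀ y : H, R' y ∈ A.adjoint.domain)
    (hR'_right : ∀ y : H, R' y - A.adjoint ⟨R' y, hR'_mem y⟩ = y)
    (hR'_left : ∀ x : A.adjoint.domain, R' ((x : H) - A.adjoint x) = (x : H)) :
    IsSelfAdjoint (R'.comp R) ∧
      (∀ x : H, x ≠ 0 → 0 < ⟪(R'.comp R) x, x⟫) ∧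
      (∀ x : H, ∃ h : (R'.comp R) x ∈ A.adjoint.domain,
        0 ≤ ⟪(R'.comp R) x - A.adjoint ⟨(R'.comp R) x, h⟩, x⟫) := by
  have hfa := A.adjoint_isFormalAdjoint hdense
  -- key identity: ⟪R y, z⟫ = ⟪y, R' z⟫
  have hkey : ∀ y z : H, ⟪R y, z⟫ = ⟪y, R' z⟫ := by
    intro y z
    set u : A.domain := ⟨R y, hR_mem y⟩ with hu
    set v : A.adjoint.domain := ⟨R' z, hR'_mem z⟩ with hv
    have hy : (u : H) - A u = y := hR_right y
    have hz : (v : H) - A.adjoint v = z := hR'_right z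
    have hadj : ⟪A.adjoint v, (u : H)⟫ = ⟪(v : H), A u⟫ := hfa v u
    have lhs : ⟪R y, z⟫ = ⟪(u : H), (v : H)⟫ - ⟪(u : H), A.adjoint v⟫ := by
      conv_lhs => rw [← hz]
      rw [inner_sub_right]
    have rhs : ⟪y, R' z⟫ = ⟪(u : H), (v : H)⟫ - ⟪A u, (v : H)⟫ := by
      conv_lhs => rw [← hy]
      rw [inner_sub_left]
    rw [lhs, rhs, real_inner_comm (A.adjoint v) ((u : H)), hadj,
      real_inner_comm ((v : H)) (A u)]
  have hadjR : R' = ContinuousLinearMap.adjoint R := by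
    rw [ContinuousLinearMap.eq_adjoint_iff]
    intro x y
    rw [real_inner_comm y (R' x), ← hkey y x, real_inner_comm]
  have hRinj : ∀ x : H, R x = 0 → x = 0 := by
    intro x hx
    have h := hR_right x
    have h0 : (⟨R x, hR_mem x⟩ : A.domain) = 0 := by ext; simp [hx]
    rw [h0] at h
    simp [hx] at h
    exact h.symm
  refine ⟨?_, ?_, ?_⟩
  · rw [IsSelfAdjoint, ContinuousLinearMap.star_eq_adjoint,
      ContinuousLinearMap.adjoint_comp, hadjR, ContinuousLinearMap.adjoint_adjoint]
  · intro x hx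
    have h1 : ⟪(R'.comp R) x, x⟫ = ⟪R x, R x⟫ := by
      simp only [ContinuousLinearMap.comp_apply]
      rw [real_inner_comm x (R' (R x)), hkey]
    rw [h1]
    have hne : R x ≠ 0 := fun h => hx (hRinj x h)
    exact real_inner_self_nonneg.lt_of_ne (Ne.symm (inner_self_ne_zero.mpr hne))
  · intro x
    refine ⟨hR'_mem (R x), ?_⟩
    have heq : (R'.comp R) x - A.adjoint ⟨(R'.comp R) x, hR'_mem (R x)⟩ = R x :=
      hR'_right (R x)
    rw [heq]
    set u : A.domain := ⟨R x, hR_mem x⟩ with hu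
    have hx' : (u : H) - A u = x := hR_right x
    have h2 : ⟪R x, x⟫ = ⟪(u : H), (u : H) - A u⟫ := by rw [hx']
    rw [h2, inner_sub_right]
    have h3 : ⟪(u : H), A u⟫ ≤ 0 := by
      rw [real_inner_comm]; exact hdiss u
    have h4 : (0:ℝ) ≤ ⟪(u : H), (u : H)⟫ := real_inner_self_nonneg
    linarith
end

section
/- Let A be a densely defined maximal dissipative linear operator on a real Hilbert space H, and B := ((-A+I)(-A*+I))^{-1}. Then the range of B^{1/2} equals the domain of A*, and consequently A*B^{1/2} extends to a bounded operator on H. -/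
open scoped RealInnerProductSpace

/-- Auxiliary factorization lemma: if `S` and `R` are bounded operators with `‖S z‖ = ‖R z‖`
for all `z`, then for every `y` there is `v` with `‖v‖ ≤ ‖y‖` and `⟪v, S z⟫ = ⟪y, R z⟫`
for all `z`. -/
theorem statement_1_aux
    {H : Type*} [NormedAddCommGroup H] [InnerProductSpace ℝ H] [CompleteSpace H]
    (S R : H →L[ℝ] H) (hnorm : ∀ z : H, ‖S z‖ = ‖R z‖) (y : H) :
    ∃ v : H, ‖v‖ ≤ ‖y‖ ∧ ∀ z : H, ⟪v, S z⟫ = ⟪y, R z⟫ := by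
  set f : H →ₗ[ℝ] ℝ :=
    { toFun := fun z => ⟪y, R z⟫
      map_add' := by intro a b; simp [inner_add_right]
      map_smul' := by intro c a; simp [inner_smul_right] } with hf
  have hker : LinearMap.ker (S : H →ₗ[ℝ] H) ≤ LinearMap.ker f := by
    intro z hz
    have hz' : S z = 0 := hz
    have hR : R z = 0 := by
      have := hnorm z
      rw [hz', norm_zero] at this
      exact norm_eq_zero.mp this.symm
    simp [hf, hR]
  set Sl : H →ₗ[ℝ] H := (S : H →ₗ[ℝ] H) with hSl
  set g : LinearMap.range Sl →ₗ[ℝ] ℝ :=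
    ((LinearMap.ker Sl).liftQ f hker).comp Sl.quotKerEquivRange.symm.toLinearMap with hg
  have hg_apply : ∀ (z : H) (h : Sl z ∈ LinearMap.range Sl), g ⟨Sl z, h⟩ = f z := by
    intro z h
    have := Sl.quotKerEquivRange_symm_apply_image z h
    simp only [hg, LinearMap.comp_apply, LinearEquiv.coe_toLinearMap, this]
    simp [Submodule.liftQ_apply]
  have hbound : ∀ m : LinearMap.range Sl, ‖g m‖ ≤ ‖y‖ * ‖(m : H)‖ := by
    rintro ⟨m, hm⟩
    obtain ⟨z, rfl⟩ := hm
    rw [hg_apply z (LinearMap.mem_range_self Sl z)]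
    have h1 : ‖f z‖ ≤ ‖y‖ * ‖R z‖ := by
      simpa [hf] using abs_real_inner_le_norm y (R z)
    calc ‖f z‖ ≤ ‖y‖ * ‖R z‖ := h1
      _ = ‖y‖ * ‖Sl z‖ := by rw [← hnorm z]; rfl
  set gC : LinearMap.range Sl →L[ℝ] ℝ := g.mkContinuous ‖y‖ hbound with hgC
  obtain ⟨G, hG, hGnorm⟩ := exists_extension_norm_eq (LinearMap.range Sl) gC
  refine ⟨(InnerProductSpace.toDual ℝ H).symm G, ?_, ?_⟩
  · rw [LinearIsometryEquiv.norm_map, hGnorm]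
    exact LinearMap.mkContinuous_norm_le g (norm_nonneg y) hbound
  · intro z
    have hmem : S z ∈ LinearMap.range Sl := LinearMap.mem_range_self Sl z
    have h1 : G (S z) = gC ⟨S z, hmem⟩ := hG ⟨S z, hmem⟩
    have h2 : gC ⟨S z, hmem⟩ = f z := hg_apply z hmem
    rw [InnerProductSpace.toDual_symm_apply, h1, h2]
    rfl

/-- Let `A` be a densely defined maximal dissipative linear operator on a real
Hilbert space `H`, and `B := ((-A+I)(-A*+I))⁻¹ = R' ∘ R`, where `R = (-A+I)⁻¹`,
`R' = (-A*+I)⁻¹`. Let `S = B^{1/2}` be the positive square root of `B`. Then the range of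
`B^{1/2}` equals the domain of `A*`, and consequently `A* B^{1/2}` extends to a bounded
operator on `H`. -/
theorem statement_1
    {H : Type*} [NormedAddCommGroup H] [InnerProductSpace ℝ H] [CompleteSpace H]
    (A : H →ₗ.[ℝ] H)
    (hdense : Dense (A.domain : Set H))
    (hdiss : ∀ x : A.domain, ⟪A x, (x : H)⟫ ≤ 0)
    (R R' : H →L[ℝ] H)
    -- `R` is the inverse of `-A + I`
    (hR_mem : ∀ y : H, R y ∈ A.domain)
    (hR_right : ∀ y : H, R y - A ⟨R y, hR_mem y⟩ = y)
    (hR_left : ∀ x : A.domain, R ((x : H) - A x) = (x : H))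
    -- `R'` is the inverse of `-A* + I`
    (hR'_mem : ∀ y : H, R' y ∈ A.adjoint.domain)
    (hR'_right : ∀ y : H, R' y - A.adjoint ⟨R' y, hR'_mem y⟩ = y)
    (hR'_left : ∀ x : A.adjoint.domain, R' ((x : H) - A.adjoint x) = (x : H))
    -- `S` is the positive square root `B^{1/2}` of `B = R' ∘ R`
    (S : H →L[ℝ] H)
    (hS_sa : IsSelfAdjoint S)
    (hS_pos : ∀ x : H, 0 ≤ ⟪S x, x⟫)
    (hS_sq : S.comp S = R'.comp R) :
    Set.range (⇑S) = (A.adjoint.domain : Set H) ∧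
      ∃ C : ℝ, ∀ x : H, ∃ h : S x ∈ A.adjoint.domain,
        ‖A.adjoint ⟨S x, h⟩‖ ≤ C * ‖x‖ := by
  -- formal adjoint property
  have hadj : ∀ (u : A.domain) (w : A.adjoint.domain),
      ⟪A.adjoint w, (u : H)⟫ = ⟪(w : H), A u⟫ := fun u w =>
    (A.adjoint_isFormalAdjoint hdense) w u
  have hSsym : ∀ a b : H, ⟪S a, b⟫ = ⟪a, S b⟫ := by
    intro a b
    conv_lhs => rw [← hS_sa.adjoint_eq]
    rw [ContinuousLinearMap.adjoint_inner_left]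
  -- `R'` is the adjoint of `R`
  have hRR' : ∀ x z : H, ⟪R x, z⟫ = ⟪x, R' z⟫ := by
    intro x z
    set u : A.domain := ⟨R x, hR_mem x⟩ with hu
    set w : A.adjoint.domain := ⟨R' z, hR'_mem z⟩ with hw
    have h1 : (u : H) - A u = x := hR_right x
    have h2 : (w : H) - A.adjoint w = z := hR'_right z
    have h3 : ⟪A u, (w : H)⟫ = ⟪(u : H), A.adjoint w⟫ :=
      calc ⟪A u, (w : H)⟫ = ⟪(w : H), A u⟫ := real_inner_comm _ _
        _ = ⟪A.adjoint w, (u : H)⟫ := (hadj u w).symm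
        _ = ⟪(u : H), A.adjoint w⟫ := real_inner_comm _ _
    calc ⟪R x, z⟫ = ⟪(u : H), (w : H) - A.adjoint w⟫ := by rw [h2]
      _ = ⟪(u : H), (w : H)⟫ - ⟪(u : H), A.adjoint w⟫ := by rw [inner_sub_right]
      _ = ⟪(u : H), (w : H)⟫ - ⟪A u, (w : H)⟫ := by rw [h3]
      _ = ⟪(u : H) - A u, (w : H)⟫ := by rw [inner_sub_left]
      _ = ⟪x, R' z⟫ := by rw [h1]
  -- the key norm identity: ‖S z‖ = ‖R z‖
  have hnorm : ∀ z : H, ‖S z‖ = ‖R z‖ := by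
    intro z
    have h1 : ⟪S z, S z⟫ = ⟪R z, R z⟫ := by
      calc ⟪S z, S z⟫ = ⟪z, S (S z)⟫ := hSsym z (S z)
        _ = ⟪z, R' (R z)⟫ := by
            have hcomp : S (S z) = R' (R z) := by
              rw [← ContinuousLinearMap.comp_apply, ← ContinuousLinearMap.comp_apply, hS_sq]
            rw [hcomp]
        _ = ⟪R z, R z⟫ := (hRR' z (R z)).symm
    have := congrArg Real.sqrt h1
    rwa [real_inner_self_eq_norm_sq, real_inner_self_eq_norm_sq,
      Real.sqrt_sq (norm_nonneg _), Real.sqrt_sq (norm_nonneg _)] at this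
  -- Range S ⊆ Range R' : for each x, S x = R' v with ‖v‖ ≤ ‖x‖
  have hSR' : ∀ x : H, ∃ v : H, ‖v‖ ≤ ‖x‖ ∧ S x = R' v := by
    intro x
    obtain ⟨v, hv1, hv2⟩ := statement_1_aux R S (fun z => (hnorm z).symm) x
    refine ⟨v, hv1, ?_⟩
    apply ext_inner_right ℝ
    intro z
    have h2 : ⟪R' v, z⟫ = ⟪v, R z⟫ :=
      calc ⟪R' v, z⟫ = ⟪z, R' v⟫ := real_inner_comm _ _
        _ = ⟪R z, v⟫ := (hRR' z v).symm
        _ = ⟪v, R z⟫ := real_inner_comm _ _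
    rw [hSsym x z, h2, hv2 z]
  -- Range R' ⊆ Range S
  have hR'S : ∀ y : H, ∃ w : H, S w = R' y := by
    intro y
    obtain ⟨w, _, hw2⟩ := statement_1_aux S R hnorm y
    refine ⟨w, ?_⟩
    apply ext_inner_right ℝ
    intro z
    have h2 : ⟪R' y, z⟫ = ⟪y, R z⟫ :=
      calc ⟪R' y, z⟫ = ⟪z, R' y⟫ := real_inner_comm _ _
        _ = ⟪R z, y⟫ := (hRR' z y).symm
        _ = ⟪y, R z⟫ := real_inner_comm _ _
    rw [hSsym w z, h2, hw2 z]
  constructor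
  · apply Set.eq_of_subset_of_subset
    · rintro _ ⟨x, rfl⟩
      obtain ⟨v, _, hv⟩ := hSR' x
      rw [hv]
      exact hR'_mem v
    · intro x hx
      have h1 : R' (x - A.adjoint ⟨x, hx⟩) = x := hR'_left ⟨x, hx⟩
      obtain ⟨w, hw⟩ := hR'S (x - A.adjoint ⟨x, hx⟩)
      exact ⟨w, by rw [hw, h1]⟩
  · refine ⟨‖S‖ + 1, fun x => ?_⟩
    obtain ⟨v, hv1, hv2⟩ := hSR' x
    have hmem : S x ∈ A.adjoint.domain := hv2 ▸ hR'_mem v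
    refine ⟨hmem, ?_⟩
    have key : A.adjoint ⟨S x, hmem⟩ = S x - v := by
      have h1 : (⟨S x, hmem⟩ : A.adjoint.domain) = ⟨R' v, hR'_mem v⟩ := Subtype.ext hv2
      rw [h1]
      have h2 := hR'_right v
      have : A.adjoint ⟨R' v, hR'_mem v⟩ = R' v - v :=
        eq_sub_of_add_eq (sub_eq_iff_eq_add'.mp h2).symm
      rw [this, ← hv2]
    rw [key]
    calc ‖S x - v‖ ≤ ‖S x‖ + ‖v‖ := norm_sub_le _ _
      _ ≤ ‖S‖ * ‖x‖ + ‖x‖ := add_le_add (S.le_opNorm x) hv1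
      _ = (‖S‖ + 1) * ‖x‖ := by ring
end

section
/- Let Q := {μ ∈ P₁(H) : ∫_H ‖x‖² dμ(x) ≤ c} for a fixed constant c ≥ 0. Then Q is closed in P₁(H₋₁) with respect to the 1-Wasserstein distance d_{1,-1}: if μₙ ∈ Q converge to μ in (P₁(H₋₁), d_{1,-1}), then μ is supported on H and ∫_H ‖x‖² dμ(x) ≤ c. -/
open MeasureTheory Filter
open scoped Topology ENNReal

def IsCoupling {X : Type*} [MeasurableSpace X] (γ : Measure (X × X)) (μ ν : Measure X) : Prop :=
  γ.map Prod.fst = μ ∧ γ.map Prod.snd = ν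

/-- The Wasserstein-type transport distance associated with a cost function `c`.
With `c = dist` this is the `1`-Wasserstein distance. -/
noncomputable def W1 {X : Type*} [MeasurableSpace X] (c : X → X → ℝ) (μ ν : Measure X) : ℝ :=
  sInf {r | ∃ γ : Measure (X × X), IsCoupling γ μ ν ∧
    Integrable (fun p => c p.1 p.2) γ ∧ r = ∫ p, c p.1 p.2 ∂γ}

/-!
Convergence in `W1` implies weak convergence: for a `K`-Lipschitz test function `f` and any
coupling `γ`, `|∫ f dμ - ∫ f dν| ≤ K ∫ dist dγ`. By the portmanteau theorem,
`ν U ≤ liminf μₙ (ι⁻¹ U)` for every open `U ⊆ W`. Closed balls of the Hilbert space `H` are weakly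
compact, so their images `K r = ι '' closedBall 0 r` are closed in `W`; with `U = (K r)ᶜ` and
Chebyshev's inequality, `ν (K r)ᶜ ≤ c / r²`. Hence `ν` is carried by `ι '' H` and equals the image
of `μ' = ν.comap ι`. The same bound on the superlevel sets of `‖x‖²`, integrated by the layer-cake
formula and Fatou's lemma, gives `∫ ‖x‖² dμ' ≤ c`.
-/

theorem isCoupling_prod {X : Type*} [MeasurableSpace X] (μ ν : Measure X)
    [IsProbabilityMeasure μ] [IsProbabilityMeasure ν] :
    IsCoupling (μ.prod ν) μ ν := by
  constructor <;> simp

section Wasserstein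

variable {X : Type*} [PseudoMetricSpace X] [MeasurableSpace X]

theorem abs_integral_sub_integral_le_of_isCoupling {γ : Measure (X × X)} {μ ν : Measure X}
    (hγ : IsCoupling γ μ ν) {f : X → ℝ} {K : NNReal} (hf : LipschitzWith K f)
    (hfμ : Integrable f μ) (hfν : Integrable f ν)
    (hdist : Integrable (fun p : X × X => dist p.1 p.2) γ) :
    |∫ x, f x ∂μ - ∫ x, f x ∂ν| ≤ K * ∫ p, dist p.1 p.2 ∂γ := by
  obtain ⟨rfl, rfl⟩ := hγ
  have hfst : Integrable (fun p : X × X => f p.1) γ :=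
    (integrable_map_measure hfμ.aestronglyMeasurable measurable_fst.aemeasurable).1 hfμ
  have hsnd : Integrable (fun p : X × X => f p.2) γ :=
    (integrable_map_measure hfν.aestronglyMeasurable measurable_snd.aemeasurable).1 hfν
  rw [integral_map measurable_fst.aemeasurable hfμ.aestronglyMeasurable,
    integral_map measurable_snd.aemeasurable hfν.aestronglyMeasurable,
    ← integral_sub hfst hsnd, ← integral_const_mul]
  exact norm_integral_le_of_norm_le (f := fun p : X × X => f p.1 - f p.2) (hdist.const_mul K)
    (ae_of_all _ fun p => hf.dist_le_mul p.1 p.2)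

end Wasserstein

section NormedWasserstein

variable {E : Type*} [NormedAddCommGroup E] [MeasurableSpace E] [BorelSpace E]
  [SecondCountableTopology E]

theorem integrable_dist_prod {μ ν : Measure E} [IsProbabilityMeasure μ] [IsProbabilityMeasure ν]
    (hμ : Integrable (fun x => ‖x‖) μ) (hν : Integrable (fun x => ‖x‖) ν) :
    Integrable (fun p : E × E => dist p.1 p.2) (μ.prod ν) :=
  ((hμ.comp_fst ν).add (hν.comp_snd μ)).mono
    (continuous_fst.dist continuous_snd).aestronglyMeasurable (ae_of_all _ fun p => by
      simpa [dist_eq_norm, abs_of_nonneg (add_nonneg (norm_nonneg p.1) (norm_nonneg p.2))]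
        using norm_sub_le p.1 p.2)

theorem abs_integral_sub_integral_le_W1 {μ ν : Measure E} [IsProbabilityMeasure μ]
    [IsProbabilityMeasure ν] (hμ : Integrable (fun x => ‖x‖) μ) (hν : Integrable (fun x => ‖x‖) ν)
    {f : E → ℝ} {K : NNReal} (hf : LipschitzWith K f) (hfμ : Integrable f μ)
    (hfν : Integrable f ν) :
    |∫ x, f x ∂μ - ∫ x, f x ∂ν| ≤ K * W1 dist μ ν := by
  have hbound : ∀ γ, IsCoupling γ μ ν → Integrable (fun p : E × E => dist p.1 p.2) γ →
      |∫ x, f x ∂μ - ∫ x, f x ∂ν| ≤ K * ∫ p, dist p.1 p.2 ∂γ := fun γ hγ hdist =>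
    abs_integral_sub_integral_le_of_isCoupling hγ hf hfμ hfν hdist
  rcases eq_zero_or_pos K with rfl | hK
  · simpa using hbound _ (isCoupling_prod μ ν) (integrable_dist_prod hμ hν)
  rw [← div_le_iff₀' (by exact_mod_cast hK)]
  -- the product coupling makes the set nonempty; `W1` would be the junk `sInf ∅ = 0` otherwise
  refine le_csInf ⟨_, _, isCoupling_prod μ ν, integrable_dist_prod hμ hν, rfl⟩ ?_
  rintro _ ⟨γ, hγ, hdist, rfl⟩
  rw [div_le_iff₀' (by exact_mod_cast hK)]
  exact hbound γ hγ hdist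

theorem MeasureTheory.ProbabilityMeasure.tendsto_of_tendsto_W1 {μs : ℕ → ProbabilityMeasure E}
    {ν : ProbabilityMeasure E} (hμs : ∀ n, Integrable (fun x => ‖x‖) (μs n : Measure E))
    (hν : Integrable (fun x => ‖x‖) (ν : Measure E))
    (h : Tendsto (fun n => W1 dist (μs n : Measure E) ν) atTop (𝓝 0)) :
    Tendsto μs atTop (𝓝 ν) := by
  refine tendsto_iff_forall_lipschitz_integral_tendsto.2 fun f ⟨C, hC⟩ ⟨K, hK⟩ => ?_
  let fb : BoundedContinuousFunction E ℝ := .mkOfBound ⟨f, hK.continuous⟩ C hC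
  rw [tendsto_iff_dist_tendsto_zero]
  refine squeeze_zero (fun _ => dist_nonneg) (fun n => ?_) (by simpa using h.const_mul (K : ℝ))
  exact abs_integral_sub_integral_le_W1 (hμs n) hν hK (fb.integrable _) (fb.integrable _)

end NormedWasserstein

open InnerProductSpace in
theorem isCompact_toWeakSpace_closedBall {H : Type*} [NormedAddCommGroup H]
    [InnerProductSpace ℝ H] [CompleteSpace H] (r : ℝ) :
    IsCompact (toWeakSpace ℝ H '' Metric.closedBall 0 r) := by
  -- Banach–Alaoglu in `WeakDual ℝ H`, transported to the weak topology of `H` by Riesz.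
  let riesz : WeakDual ℝ H → WeakSpace ℝ H :=
    fun f => toWeakSpace ℝ H ((toDual ℝ H).symm (WeakDual.toStrongDual f))
  have hriesz : Continuous riesz := by
    refine WeakBilin.continuous_of_continuous_eval _ fun ℓ => ?_
    have hℓ : ∀ f : WeakDual ℝ H, ℓ ((toDual ℝ H).symm (WeakDual.toStrongDual f)) =
        f ((toDual ℝ H).symm ℓ) := fun f => by
      rw [← toDual_symm_apply (𝕜 := ℝ), real_inner_comm, toDual_symm_apply]; rfl
    exact (WeakDual.eval_continuous ((toDual ℝ H).symm ℓ)).congr fun f => (hℓ f).symm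
  convert (WeakDual.isCompact_closedBall (0 : StrongDual ℝ H) r).image hriesz using 1
  ext x
  simp only [Set.mem_image, Metric.mem_closedBall, dist_zero_right, Set.mem_preimage, riesz]
  constructor
  · rintro ⟨y, hy, rfl⟩
    exact ⟨WeakDual.toStrongDual.symm (toDual ℝ H y), by simpa using hy, by simp⟩
  · rintro ⟨f, hf, rfl⟩
    exact ⟨_, by simpa using hf, rfl⟩

theorem ContinuousLinearMap.isClosed_image_closedBall {H W : Type*} [NormedAddCommGroup H]
    [InnerProductSpace ℝ H] [CompleteSpace H] [NormedAddCommGroup W] [NormedSpace ℝ W]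
    (ι : H →L[ℝ] W) (r : ℝ) : IsClosed (ι '' Metric.closedBall 0 r) := by
  have hweak : IsClosed (WeakSpace.map ι '' (toWeakSpace ℝ H '' Metric.closedBall 0 r)) :=
    ((isCompact_toWeakSpace_closedBall r).image (WeakSpace.map ι).continuous).isClosed
  convert hweak.preimage (toWeakSpaceCLM ℝ W).continuous
  ext y
  simp only [Set.image_image, Set.mem_preimage]
  rfl

theorem measure_lt_norm_le_lintegral_sq_div {E : Type*} [NormedAddCommGroup E]
    [MeasurableSpace E] [OpensMeasurableSpace E] (μ : Measure E) {r : ℝ} (hr : 0 < r) :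
    μ {x | r < ‖x‖} ≤ (∫⁻ x, ENNReal.ofReal (‖x‖ ^ 2) ∂μ) / ENNReal.ofReal (r ^ 2) :=
  (measure_mono fun x (hx : r < ‖x‖) =>
      ENNReal.ofReal_le_ofReal (pow_le_pow_left₀ hr.le hx.le 2)).trans
    (meas_ge_le_lintegral_div (by fun_prop) (by positivity) ENNReal.ofReal_ne_top)

theorem lintegral_le_liminf_lintegral_of_forall_measure_lt_le_liminf {α : Type*}
    [MeasurableSpace α] {μ : Measure α} {μs : ℕ → Measure α} {f : α → ℝ} (hf : Measurable f)
    (hf_nn : 0 ≤ f) (h : ∀ t > 0, μ {x | t < f x} ≤ liminf (fun n => μs n {x | t < f x}) atTop) :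
    ∫⁻ x, ENNReal.ofReal (f x) ∂μ ≤ liminf (fun n => ∫⁻ x, ENNReal.ofReal (f x) ∂μs n) atTop := by
  simp_rw [lintegral_eq_lintegral_meas_lt _ (Eventually.of_forall hf_nn) hf.aemeasurable]
  calc ∫⁻ t in Set.Ioi 0, μ {x | t < f x}
      ≤ ∫⁻ t in Set.Ioi 0, liminf (fun n => μs n {x | t < f x}) atTop :=
        setLIntegral_mono' measurableSet_Ioi h
    _ ≤ liminf (fun n => ∫⁻ t in Set.Ioi 0, μs n {x | t < f x}) atTop :=
        lintegral_liminf_le fun n => Antitone.measurable fun _ _ hst =>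
          measure_mono fun _ hx => lt_of_le_of_lt hst hx

theorem ae_mem_range_of_measure_compl_image_closedBall_le {H W : Type*} [NormedAddCommGroup H]
    [MeasurableSpace W] {ι : H → W} {ν : Measure W} {C : ℝ≥0∞} (hC : C ≠ ∞)
    (h : ∀ r > 0, ν (ι '' Metric.closedBall 0 r)ᶜ ≤ C / ENNReal.ofReal (r ^ 2)) :
    ∀ᵐ y ∂ν, y ∈ Set.range ι := by
  have htend : Tendsto (fun r : ℝ => C / ENNReal.ofReal (r ^ 2)) atTop (𝓝 0) := by
    simpa using ENNReal.Tendsto.const_div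
      (ENNReal.tendsto_ofReal_atTop.comp (tendsto_pow_atTop two_ne_zero)) (Or.inr hC)
  refine ae_iff.2 (le_antisymm (ge_of_tendsto htend ?_) zero_le)
  filter_upwards [eventually_gt_atTop 0] with r hr
  exact (measure_mono fun y hy ⟨x, _, hx⟩ => hy ⟨x, hx⟩).trans (h r hr)

theorem ContinuousLinearMap.integrable_norm_map {E F : Type*} [NormedAddCommGroup E]
    [NormedSpace ℝ E] [MeasurableSpace E] [OpensMeasurableSpace E] [NormedAddCommGroup F]
    [NormedSpace ℝ F] [MeasurableSpace F] [BorelSpace F] (ι : E →L[ℝ] F) {μ : Measure E}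
    (hμ : Integrable (fun x => ‖x‖) μ) : Integrable (fun y => ‖y‖) (μ.map ι) := by
  rw [integrable_map_measure continuous_norm.aestronglyMeasurable ι.continuous.aemeasurable]
  exact (hμ.const_mul ‖ι‖).mono' ι.continuous.norm.aestronglyMeasurable
    (ae_of_all _ fun x => by simpa using ι.le_opNorm x)

theorem preimage_compl_image_closedBall {E X : Type*} [NormedAddCommGroup E] {ι : E → X}
    (hι : Function.Injective ι) (r : ℝ) :
    ι ⁻¹' (ι '' Metric.closedBall 0 r)ᶜ = {x | r < ‖x‖} := by
  rw [Set.preimage_compl, hι.preimage_image]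
  ext; simp

theorem measure_compl_image_closedBall_le_liminf {H W : Type*} [NormedAddCommGroup H]
    [InnerProductSpace ℝ H] [CompleteSpace H] [MeasurableSpace H] [BorelSpace H]
    [NormedAddCommGroup W] [NormedSpace ℝ W] [MeasurableSpace W] [BorelSpace W]
    [SecondCountableTopology W] (ι : H →L[ℝ] W)
    (hι : Function.Injective ι) {μ : ℕ → Measure H} [∀ n, IsProbabilityMeasure (μ n)]
    (hμ : ∀ n, Integrable (fun x => ‖x‖) (μ n)) {ν : Measure W} [IsProbabilityMeasure ν]
    (hν : Integrable (fun y => ‖y‖) ν)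
    (hconv : Tendsto (fun n => W1 dist ((μ n).map ι) ν) atTop (𝓝 0)) (r : ℝ) :
    ν (ι '' Metric.closedBall 0 r)ᶜ ≤ liminf (fun n => μ n {x | r < ‖x‖}) atTop := by
  let μs : ℕ → ProbabilityMeasure W := fun n =>
    ⟨(μ n).map ι, Measure.isProbabilityMeasure_map ι.continuous.aemeasurable⟩
  have hweak : Tendsto μs atTop (𝓝 ⟨ν, ‹_›⟩) :=
    ProbabilityMeasure.tendsto_of_tendsto_W1 (fun n => ι.integrable_norm_map (hμ n)) hν hconv
  have hopen := ProbabilityMeasure.le_liminf_measure_open_of_tendsto hweak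
    (ι.isClosed_image_closedBall r).isOpen_compl
  simpa [μs, Measure.map_apply ι.continuous.measurable
    (ι.isClosed_image_closedBall r).isOpen_compl.measurableSet,
    preimage_compl_image_closedBall hι] using hopen

theorem statement_4_general
    {H W : Type*}
    [NormedAddCommGroup H] [InnerProductSpace ℝ H] [CompleteSpace H]
    [SecondCountableTopology H] [MeasurableSpace H] [BorelSpace H]
    [NormedAddCommGroup W] [InnerProductSpace ℝ W]
    [SecondCountableTopology W] [MeasurableSpace W] [BorelSpace W]
    -- the embedding `ι : H → H₋₁` is linear, continuous, injective and compact
    (ι : H →L[ℝ] W) (hι_inj : Function.Injective ⇑ι)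
    (c : ℝ)
    (μ : ℕ → Measure H) (hprob : ∀ n, IsProbabilityMeasure (μ n))
    (hmem : ∀ n, ∫⁻ x, ENNReal.ofReal (‖x‖ ^ 2) ∂(μ n) ≤ ENNReal.ofReal c)
    (hmom1 : ∀ n, Integrable (fun x : H => ‖x‖) (μ n))
    (ν : Measure W) (hν : IsProbabilityMeasure ν)
    (hν1 : Integrable (fun y : W => ‖y‖) ν)
    (hconv : Tendsto (fun n => W1 dist ((μ n).map ι) ν) atTop (𝓝 0)) :
    ∃ μ' : Measure H, IsProbabilityMeasure μ' ∧ ν = μ'.map ι ∧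
      ∫⁻ x, ENNReal.ofReal (‖x‖ ^ 2) ∂μ' ≤ ENNReal.ofReal c := by
  have hEmb : MeasurableEmbedding ι := ι.continuous.measurableEmbedding hι_inj
  have h_tail := measure_compl_image_closedBall_le_liminf ι hι_inj hmom1 hν1 hconv
  have h_range : ∀ᵐ y ∂ν, y ∈ Set.range ι :=
    ae_mem_range_of_measure_compl_image_closedBall_le ENNReal.ofReal_ne_top fun r hr =>
      (h_tail r).trans <| liminf_le_of_frequently_le <| Frequently.of_forall fun n =>
        (measure_lt_norm_le_lintegral_sq_div (μ n) hr).trans (ENNReal.div_le_div_right (hmem n) _)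
  refine ⟨ν.comap ι, hEmb.isProbabilityMeasure_comap h_range, ?_, ?_⟩
  · rw [hEmb.map_comap, Measure.restrict_eq_self_of_ae_mem h_range]
  refine (lintegral_le_liminf_lintegral_of_forall_measure_lt_le_liminf (by fun_prop)
    (fun x => sq_nonneg ‖x‖) fun t ht => ?_).trans
    (liminf_le_of_frequently_le (Frequently.of_forall hmem))
  have hsq : {x : H | t < ‖x‖ ^ 2} = {x | √t < ‖x‖} := by
    ext x; simp [Real.sqrt_lt ht.le (norm_nonneg x)]
  rw [hEmb.comap_apply, hsq]
  refine (measure_mono ?_).trans (h_tail _)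
  rw [Set.image_subset_iff, preimage_compl_image_closedBall hι_inj]

/-- Let `Q := {μ ∈ P₁(H) : ∫ ‖x‖² dμ ≤ c}`. Then `Q` is closed in
`(P₁(H₋₁), d_{1,-1})`: if `μₙ ∈ Q` (viewed in `H₋₁` via the compact embedding `ι`) converge
to `μ` in the 1-Wasserstein distance of `H₋₁`, then `μ` is supported on `H`, i.e. `μ = ι_* μ'`
for a probability measure `μ'` on `H`, and `∫_H ‖x‖² dμ' ≤ c`. -/
theorem statement_4
    {H W : Type*}
    [NormedAddCommGroup H] [InnerProductSpace ℝ H] [CompleteSpace H]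
    [SecondCountableTopology H] [MeasurableSpace H] [BorelSpace H]
    [NormedAddCommGroup W] [InnerProductSpace ℝ W] [CompleteSpace W]
    [SecondCountableTopology W] [MeasurableSpace W] [BorelSpace W]
    -- the embedding `ι : H → H₋₁` is linear, continuous, injective and compact
    (ι : H →L[ℝ] W) (hι_inj : Function.Injective ⇑ι) (hι_compact : IsCompactOperator ⇑ι)
    (c : ℝ) (hc : 0 ≤ c)
    (μ : ℕ → Measure H) (hprob : ∀ n, IsProbabilityMeasure (μ n))
    (hmem : ∀ n, ∫⁻ x, ENNReal.ofReal (‖x‖ ^ 2) ∂(μ n) ≤ ENNReal.ofReal c)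
    (hmom1 : ∀ n, Integrable (fun x : H => ‖x‖) (μ n))
    (ν : Measure W) (hν : IsProbabilityMeasure ν)
    (hν1 : Integrable (fun y : W => ‖y‖) ν)
    (hconv : Tendsto (fun n => W1 dist ((μ n).map ι) ν) atTop (𝓝 0)) :
    ∃ μ' : Measure H, IsProbabilityMeasure μ' ∧ ν = μ'.map ι ∧
      ∫⁻ x, ENNReal.ofReal (‖x‖ ^ 2) ∂μ' ≤ ENNReal.ofReal c :=
  statement_4_general ι hι_inj c μ hprob hmem hmom1 ν hν hν1 hconv
end

section
/- Let V be a real Hilbert space and f : V → ℝ bounded, uniformly continuous, semiconvex with constant C (i.e., x ↦ f(x) + (C/2)‖x‖² convex) and semiconcave with constant C (i.e., x ↦ f(x) − (C/2)‖x‖² concave). Then f is Fréchet differentiable and its derivative Df : V → V is Lipschitz continuous with Lipschitz constant at most C. -/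
/-!
Semiconvexity and semiconcavity with the same constant `C` pinch `f` between two quadratics
touching it at each point: the subgradients at `x` of the convex functions `f + C/2 ‖·‖²` and
`-f + C/2 ‖·‖²` (Hahn–Banach, then Riesz) must agree, which gives
`|f y - f x - ⟪p x, y - x⟫| ≤ C/2 ‖y - x‖²`, i.e. Fréchet differentiability with gradient `p`.
For the Lipschitz bound, `p + C • id` is the gradient of the convex, `2C`-smooth function
`f + C/2 ‖·‖²`, hence co-coercive: `Δ := (p + C • id) y - (p + C • id) x` satisfies
`‖Δ‖² ≤ 2C ⟪Δ, y - x⟫`, which places `p y - p x = Δ - C • (y - x)` in the ball of radius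
`C ‖y - x‖`.
-/

open Set Topology RealInnerProductSpace

theorem ConvexOn.exists_le_add_strongDual {E : Type*} [AddCommGroup E] [Module ℝ E]
    [TopologicalSpace E] [IsTopologicalAddGroup E] [ContinuousSMul ℝ E] {g : E → ℝ}
    (hg : ConvexOn ℝ univ g) (hc : Continuous g) (x : E) :
    ∃ φ : StrongDual ℝ E, ∀ y, g x + φ (y - x) ≤ g y := by
  set S : Set (E × ℝ) := {p | g p.1 - p.2 < 0}
  have hS : Convex ℝ S := by
    simpa [S] using ((hg.comp_linearMap (LinearMap.fst ℝ E ℝ)).sub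
      ((LinearMap.snd ℝ E ℝ).concaveOn convex_univ)).convex_lt 0
  have hSo : IsOpen S := isOpen_lt (by fun_prop) continuous_const
  obtain ⟨ℓ, hℓ⟩ := geometric_hahn_banach_open_point hS hSo (by simp [S] : (x, g x) ∉ S)
  set a := ℓ (0, 1)
  have hℓ_apply (y : E) (t : ℝ) : ℓ (y, t) = ℓ (y, 0) + t * a := by
    have : (y, t) = (y, 0) + t • ((0 : E), (1 : ℝ)) := by simp
    rw [this, map_add, map_smul, smul_eq_mul]
  have ha : a < 0 := by
    have hsep := hℓ (x, g x + 1) (by simp [S])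
    rw [hℓ_apply, hℓ_apply x (g x)] at hsep
    linarith
  refine ⟨(-a)⁻¹ • ℓ.comp (.inl ℝ E ℝ), fun y => le_of_forall_pos_lt_add fun ε hε => ?_⟩
  have hsep := hℓ (y, g y + ε) (by simp [S, hε])
  rw [hℓ_apply, hℓ_apply x (g x)] at hsep
  have hsub : ℓ (y - x, 0) = ℓ (y, 0) - ℓ (x, 0) := by rw [← map_sub, Prod.mk_sub_mk, sub_zero]
  have hscaled : (-a)⁻¹ * (ℓ (y, 0) - ℓ (x, 0)) < g y + ε - g x := by
    rw [inv_mul_lt_iff₀ (neg_pos.2 ha)]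
    linarith
  simp only [smul_apply, ContinuousLinearMap.comp_apply, ContinuousLinearMap.inl_apply, hsub,
    smul_eq_mul]
  linarith

section InnerProductSpace

variable {V : Type*} [NormedAddCommGroup V] [InnerProductSpace ℝ V]

theorem norm_sq_eq_norm_sq_add_inner_add_norm_sub_sq (x y : V) :
    ‖y‖ ^ 2 = ‖x‖ ^ 2 + 2 * ⟪x, y - x⟫ + ‖y - x‖ ^ 2 := by
  simpa using norm_add_sq_real x (y - x)

theorem eq_zero_of_forall_inner_le_mul_norm_sq {v : V} {C : ℝ}
    (h : ∀ w, ⟪v, w⟫ ≤ C * ‖w‖ ^ 2) : v = 0 := by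
  set t : ℝ := (2 * (|C| + 1))⁻¹
  have ht : 0 < t := by positivity
  have hCt : C * t ≤ 1 / 2 := by
    rw [← div_eq_mul_inv, div_le_iff₀ (by positivity)]
    linarith [le_abs_self C]
  have htv := h (t • v)
  rw [real_inner_smul_right, real_inner_self_eq_norm_sq, norm_smul,
    Real.norm_of_nonneg ht.le] at htv
  have hhalf : C * (t * ‖v‖) ^ 2 ≤ 1 / 2 * (t * ‖v‖ ^ 2) := by
    rw [mul_pow, sq t, mul_assoc t, ← mul_assoc]
    exact mul_le_mul_of_nonneg_right hCt (by positivity)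
  have hv : ‖v‖ ^ 2 ≤ 0 := by nlinarith
  exact norm_eq_zero.1 (pow_eq_zero_iff two_ne_zero |>.1 (le_antisymm hv (sq_nonneg _)))

theorem norm_sub_smul_le_of_norm_sq_le_inner {u d : V} {C : ℝ} (hC : 0 ≤ C)
    (h : ‖u‖ ^ 2 ≤ 2 * C * ⟪u, d⟫) : ‖u - C • d‖ ≤ C * ‖d‖ := by
  refine pow_le_pow_iff_left₀ (norm_nonneg _) (by positivity) two_ne_zero |>.1 ?_
  rw [norm_sub_sq_real, real_inner_smul_right, norm_smul, Real.norm_of_nonneg hC]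
  linarith

theorem add_inner_add_norm_sq_div_le {φ : V → ℝ} {G : V → V} {L : ℝ} (hL : 0 < L)
    (hlow : ∀ a z, φ a + ⟪G a, z - a⟫ ≤ φ z)
    (hup : ∀ a z, φ z ≤ φ a + ⟪G a, z - a⟫ + L / 2 * ‖z - a‖ ^ 2) (a b : V) :
    φ a + ⟪G a, b - a⟫ + ‖G b - G a‖ ^ 2 / (2 * L) ≤ φ b := by
  -- compare both bounds at the point reached from `b` by a gradient step of length `1 / L`
  set Δ := G b - G a
  set z := b - L⁻¹ • Δ with hz
  have h₁ : ⟪G a, z - a⟫ = ⟪G a, b - a⟫ - L⁻¹ * ⟪G a, Δ⟫ := by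
    rw [show z - a = (b - a) - L⁻¹ • Δ by rw [hz]; abel, inner_sub_right, real_inner_smul_right]
  have h₂ : ⟪G b, z - b⟫ = -(L⁻¹ * ⟪G b, Δ⟫) := by
    rw [show z - b = -(L⁻¹ • Δ) by rw [hz]; abel, inner_neg_right, real_inner_smul_right]
  have h₃ : ‖z - b‖ ^ 2 = L⁻¹ ^ 2 * ‖Δ‖ ^ 2 := by
    rw [show z - b = -(L⁻¹ • Δ) by rw [hz]; abel, norm_neg, norm_smul,
      Real.norm_of_nonneg (by positivity), mul_pow]
  have h₄ : ⟪G b, Δ⟫ - ⟪G a, Δ⟫ = ‖Δ‖ ^ 2 := by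
    rw [← inner_sub_left, real_inner_self_eq_norm_sq]
  have hchain := (hlow a z).trans (hup b z)
  rw [h₁, h₂, h₃] at hchain
  field_simp at hchain ⊢
  nlinarith

theorem norm_sub_sq_le_mul_inner_of_le_of_le {φ : V → ℝ} {G : V → V} {L : ℝ} (hL : 0 < L)
    (hlow : ∀ a z, φ a + ⟪G a, z - a⟫ ≤ φ z)
    (hup : ∀ a z, φ z ≤ φ a + ⟪G a, z - a⟫ + L / 2 * ‖z - a‖ ^ 2) (x y : V) :
    ‖G y - G x‖ ^ 2 ≤ L * ⟪G y - G x, y - x⟫ := by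
  have hxy := add_inner_add_norm_sq_div_le hL hlow hup x y
  have hyx := add_inner_add_norm_sq_div_le hL hlow hup y x
  rw [norm_sub_rev] at hyx
  have hinner : ⟪G y - G x, y - x⟫ = -⟪G y, x - y⟫ - ⟪G x, y - x⟫ := by
    rw [inner_sub_left, ← inner_neg_right, neg_sub]
  have hhalves :
      ‖G y - G x‖ ^ 2 / (2 * L) + ‖G y - G x‖ ^ 2 / (2 * L) = ‖G y - G x‖ ^ 2 / L := by
    field_simp; ring
  rw [hinner, ← div_le_iff₀' hL]
  linarith

theorem norm_sub_le_of_abs_sub_sub_inner_le_of_pos {f : V → ℝ} {p : V → V} {C : ℝ}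
    (hC : 0 < C)
    (h : ∀ x y, |f y - f x - ⟪p x, y - x⟫| ≤ C / 2 * ‖y - x‖ ^ 2) (x y : V) :
    ‖p y - p x‖ ≤ C * ‖y - x‖ := by
  -- `f + C/2 ‖·‖²` is convex with gradient `p + C • id`, and `2C`-smooth
  have hlow (a z : V) :
      (f a + C / 2 * ‖a‖ ^ 2) + ⟪p a + C • a, z - a⟫ ≤ f z + C / 2 * ‖z‖ ^ 2 := by
    have hlower := (abs_le.1 (h a z)).1
    rw [inner_add_left, real_inner_smul_left, norm_sq_eq_norm_sq_add_inner_add_norm_sub_sq a z]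
    linarith
  have hup (a z : V) : f z + C / 2 * ‖z‖ ^ 2 ≤
      (f a + C / 2 * ‖a‖ ^ 2) + ⟪p a + C • a, z - a⟫ + 2 * C / 2 * ‖z - a‖ ^ 2 := by
    have hupper := (abs_le.1 (h a z)).2
    rw [inner_add_left, real_inner_smul_left, norm_sq_eq_norm_sq_add_inner_add_norm_sub_sq a z]
    linarith
  have hcoco := norm_sub_sq_le_mul_inner_of_le_of_le (by positivity) hlow hup x y
  have hball := norm_sub_smul_le_of_norm_sq_le_inner hC.le hcoco
  rwa [show p y + C • y - (p x + C • x) - C • (y - x) = p y - p x by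
    rw [smul_sub]; abel] at hball

theorem lipschitzWith_of_abs_sub_sub_inner_le {f : V → ℝ} {p : V → V} {C : ℝ} (hC : 0 ≤ C)
    (h : ∀ x y, |f y - f x - ⟪p x, y - x⟫| ≤ C / 2 * ‖y - x‖ ^ 2) :
    LipschitzWith C.toNNReal p := by
  refine LipschitzWith.of_dist_le_mul fun y x => ?_
  rw [Real.coe_toNNReal C hC, dist_eq_norm, dist_eq_norm]
  -- `C = 0` is covered by letting larger constants `c > 0` tend to `C`
  have hc : ∀ᶠ c in 𝓝[>] C, ‖p y - p x‖ ≤ c * ‖y - x‖ :=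
    eventually_nhdsWithin_of_forall fun c (hc : C < c) =>
      norm_sub_le_of_abs_sub_sub_inner_le_of_pos (hC.trans_lt hc)
        (fun a z => (h a z).trans (by gcongr)) x y
  have hlim : Continuous fun c : ℝ => c * ‖y - x‖ := by fun_prop
  exact ge_of_tendsto (tendsto_nhdsWithin_of_tendsto_nhds hlim.continuousAt) hc

variable [CompleteSpace V]

theorem exists_le_add_inner_of_convexOn_add_sq {f : V → ℝ} {C : ℝ} (hf : Continuous f)
    (hconv : ConvexOn ℝ univ fun x => f x + C / 2 * ‖x‖ ^ 2) (x : V) :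
    ∃ p : V, ∀ y, f x + ⟪p, y - x⟫ - C / 2 * ‖y - x‖ ^ 2 ≤ f y := by
  obtain ⟨φ, hφ⟩ := hconv.exists_le_add_strongDual (by fun_prop) x
  refine ⟨(InnerProductSpace.toDual ℝ V).symm φ - C • x, fun y => ?_⟩
  have hφy := hφ y
  rw [norm_sq_eq_norm_sq_add_inner_add_norm_sub_sq x y] at hφy
  rw [inner_sub_left, InnerProductSpace.toDual_symm_apply, real_inner_smul_left]
  linarith

theorem exists_abs_sub_sub_inner_le {f : V → ℝ} {C : ℝ} (hf : Continuous f)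
    (hconv : ConvexOn ℝ univ fun x => f x + C / 2 * ‖x‖ ^ 2)
    (hconc : ConcaveOn ℝ univ fun x => f x - C / 2 * ‖x‖ ^ 2) (x : V) :
    ∃ p : V, ∀ y, |f y - f x - ⟪p, y - x⟫| ≤ C / 2 * ‖y - x‖ ^ 2 := by
  obtain ⟨p, hp⟩ := exists_le_add_inner_of_convexOn_add_sq hf hconv x
  obtain ⟨q, hq⟩ := exists_le_add_inner_of_convexOn_add_sq (f := fun y => -f y) (C := C) hf.neg
    (by simpa only [Pi.neg_def, neg_sub', sub_neg_eq_add] using hconc.neg) x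
  have hpq : p + q = 0 := eq_zero_of_forall_inner_le_mul_norm_sq (C := C) fun w => by
    have hpw := hp (x + w)
    have hqw := hq (x + w)
    rw [add_sub_cancel_left] at hpw hqw
    rw [inner_add_left]
    linarith
  rw [← neg_eq_of_add_eq_zero_right hpq] at hq
  refine ⟨p, fun y => abs_le.2 ⟨?_, ?_⟩⟩
  · linarith [hp y]
  · linarith [hq y, inner_neg_left (𝕜 := ℝ) p (y - x)]

theorem hasGradientAt_of_abs_sub_sub_inner_le {f : V → ℝ} {p x : V} {K : ℝ}
    (h : ∀ y, |f y - f x - ⟪p, y - x⟫| ≤ K * ‖y - x‖ ^ 2) : HasGradientAt f p x :=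
  hasGradientAt_iff_isLittleO.2 <|
    (Asymptotics.IsBigO.of_bound K (.of_forall fun y => by simpa using h y)).trans_isLittleO
      (Asymptotics.isLittleO_pow_sub_sub x one_lt_two)

end InnerProductSpace

theorem statement_7_general
    {V : Type*} [NormedAddCommGroup V] [InnerProductSpace ℝ V] [CompleteSpace V]
    (f : V → ℝ) (C : ℝ) (hC : 0 ≤ C)
    (hucont : UniformContinuous f)
    (hsemiconvex : ConvexOn ℝ Set.univ (fun x : V => f x + (C / 2) * ‖x‖ ^ 2))
    (hsemiconcave : ConcaveOn ℝ Set.univ (fun x : V => f x - (C / 2) * ‖x‖ ^ 2)) :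
    ∃ Df : V → V, (∀ x : V, HasGradientAt f (Df x) x) ∧
      LipschitzWith (Real.toNNReal C) Df := by
  choose Df hDf using
    exists_abs_sub_sub_inner_le hucont.continuous hsemiconvex hsemiconcave
  exact ⟨Df, fun x => hasGradientAt_of_abs_sub_sub_inner_le (hDf x),
    lipschitzWith_of_abs_sub_sub_inner_le hC hDf⟩

/-- Let `V` be a real Hilbert space and `f : V → ℝ` bounded, uniformly
continuous, semiconvex with constant `C` (i.e. `x ↦ f(x) + (C/2)‖x‖²` is convex) and
semiconcave with constant `C` (i.e. `x ↦ f(x) − (C/2)‖x‖²` is concave). Then `f` is Fréchet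
differentiable and its gradient `Df : V → V` is Lipschitz continuous with constant at most
`C`. -/
theorem statement_7
    {V : Type*} [NormedAddCommGroup V] [InnerProductSpace ℝ V] [CompleteSpace V]
    (f : V → ℝ) (C : ℝ) (hC : 0 ≤ C)
    (hbdd : ∃ M : ℝ, ∀ x : V, |f x| ≤ M)
    (hucont : UniformContinuous f)
    (hsemiconvex : ConvexOn ℝ Set.univ (fun x : V => f x + (C / 2) * ‖x‖ ^ 2))
    (hsemiconcave : ConcaveOn ℝ Set.univ (fun x : V => f x - (C / 2) * ‖x‖ ^ 2)) :
    ∃ Df : V → V, (∀ x : V, HasGradientAt f (Df x) x) ∧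
      LipschitzWith (Real.toNNReal C) Df :=
  statement_7_general f C hC hucont hsemiconvex hsemiconcave
end

section
/- Let h : H → H be bounded and ‖·‖₋₁-Lipschitz, and let G : H → H be Lipschitz and monotone (⟨G(a)−G(b), a−b⟩ ≥ 0). Define F(x, μ) := ⟨h(x), G(∫_H h dμ)⟩. Then for all μ₁, μ₂ ∈ P₁(H): ∫_H [F(x,μ₁) − F(x,μ₂)] d(μ₁−μ₂)(x) = ⟨∫h dμ₁ − ∫h dμ₂, G(∫h dμ₁) − G(∫h dμ₂)⟩ ≥ 0, i.e., F satisfies the Lasry–Lions monotonicity condition. Moreover, if G is strictly monotone, equality implies ∫h dμ₁ = ∫h dμ₂ and hence F(·,μ₁) = F(·,μ₂). -/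
open MeasureTheory
open scoped RealInnerProductSpace NNReal

/-- Let `h : H → H` be bounded and `‖·‖₋₁`-Lipschitz, and `G : H → H`
Lipschitz and monotone. Define `F(x,μ) := ⟪h(x), G(∫ h dμ)⟫`. Then for all
`μ₁, μ₂ ∈ P₁(H)`,
`∫ [F(x,μ₁) − F(x,μ₂)] d(μ₁−μ₂)(x) = ⟪∫h dμ₁ − ∫h dμ₂, G(∫h dμ₁) − G(∫h dμ₂)⟫ ≥ 0`,
i.e. `F` satisfies the Lasry–Lions monotonicity condition; and if `G` is strictly monotone,
equality forces `∫h dμ₁ = ∫h dμ₂` and hence `F(·,μ₁) = F(·,μ₂)`. -/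
theorem statement_12
    {H : Type*} [NormedAddCommGroup H] [InnerProductSpace ℝ H] [CompleteSpace H]
    [SecondCountableTopology H] [MeasurableSpace H] [BorelSpace H]
    -- `S = B^{1/2}` realizes the `H₋₁` norm: `‖x‖₋₁ = ‖S x‖`
    (S : H →L[ℝ] H)
    (h : H → H) (C : ℝ)
    (hh_bdd : ∃ M : ℝ, ∀ x, ‖h x‖ ≤ M)
    (hh_lip : ∀ x y : H, ‖h x - h y‖ ≤ C * ‖S (x - y)‖)
    (G : H → H) (K : ℝ≥0) (hG_lip : LipschitzWith K G)
    (hG_mono : ∀ a b : H, 0 ≤ ⟪G a - G b, a - b⟫)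
    (μ₁ μ₂ : Measure H)
    (hμ₁ : IsProbabilityMeasure μ₁) (hμ₂ : IsProbabilityMeasure μ₂)
    (hμ₁1 : Integrable (fun x : H => ‖x‖) μ₁)
    (hμ₂1 : Integrable (fun x : H => ‖x‖) μ₂) :
    ((∫ x, (⟪h x, G (∫ z, h z ∂μ₁)⟫ - ⟪h x, G (∫ z, h z ∂μ₂)⟫) ∂μ₁)
        - ∫ x, (⟪h x, G (∫ z, h z ∂μ₁)⟫ - ⟪h x, G (∫ z, h z ∂μ₂)⟫) ∂μ₂)
      = ⟪(∫ z, h z ∂μ₁) - ∫ z, h z ∂μ₂, G (∫ z, h z ∂μ₁) - G (∫ z, h z ∂μ₂)⟫ ∧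
    0 ≤ ⟪(∫ z, h z ∂μ₁) - ∫ z, h z ∂μ₂, G (∫ z, h z ∂μ₁) - G (∫ z, h z ∂μ₂)⟫ ∧
    ((∀ a b : H, ⟪G a - G b, a - b⟫ = 0 → a = b) →
      ((∫ x, (⟪h x, G (∫ z, h z ∂μ₁)⟫ - ⟪h x, G (∫ z, h z ∂μ₂)⟫) ∂μ₁)
          - ∫ x, (⟪h x, G (∫ z, h z ∂μ₁)⟫ - ⟪h x, G (∫ z, h z ∂μ₂)⟫) ∂μ₂) = 0 →
      (∫ z, h z ∂μ₁) = (∫ z, h z ∂μ₂) ∧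
        ∀ x : H, ⟪h x, G (∫ z, h z ∂μ₁)⟫ = ⟪h x, G (∫ z, h z ∂μ₂)⟫) := by
  obtain ⟨M, hM⟩ := hh_bdd
  have hcont : Continuous h := by
    rcases le_or_gt C 0 with hC | hC
    · have : ∀ x y : H, h x = h y := by
        intro x y
        have h1 := hh_lip x y
        have h2 : C * ‖S (x - y)‖ ≤ 0 :=
          mul_nonpos_of_nonpos_of_nonneg hC (norm_nonneg _)
        have : ‖h x - h y‖ = 0 := le_antisymm (h1.trans h2) (norm_nonneg _)
        rwa [norm_sub_eq_zero_iff] at this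
      have : h = fun _ => h 0 := funext fun x => this x 0
      rw [this]; exact continuous_const
    · apply LipschitzWith.continuous
        (LipschitzWith.of_dist_le_mul (K := ⟨C * ‖S‖, by positivity⟩) ?_)
      intro x y
      rw [dist_eq_norm, dist_eq_norm]
      calc ‖h x - h y‖ ≤ C * ‖S (x - y)‖ := hh_lip x y
      _ ≤ C * (‖S‖ * ‖x - y‖) := by
          exact mul_le_mul_of_nonneg_left (S.le_opNorm _) hC.le
      _ = (C * ‖S‖) * ‖x - y‖ := by ring
  have hint : ∀ (μ : Measure H), IsProbabilityMeasure μ → Integrable h μ := by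
    intro μ hμ
    refine ⟨hcont.aestronglyMeasurable, ?_⟩
    apply HasFiniteIntegral.mono' (g := fun _ => M) ?_ (Filter.Eventually.of_forall hM)
    exact (integrable_const M).hasFiniteIntegral
  have key : ∀ (μ : Measure H), IsProbabilityMeasure μ → ∀ c : H,
      ∫ x, ⟪h x, c⟫ ∂μ = ⟪∫ z, h z ∂μ, c⟫ := by
    intro μ hμ c
    calc ∫ x, ⟪h x, c⟫ ∂μ = ∫ x, ⟪c, h x⟫ ∂μ :=
          integral_congr_ae (Filter.Eventually.of_forall fun x => real_inner_comm c (h x))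
    _ = ⟪c, ∫ z, h z ∂μ⟫ := integral_inner (hint μ hμ) c
    _ = ⟪∫ z, h z ∂μ, c⟫ := real_inner_comm _ _
  set m₁ := ∫ z, h z ∂μ₁
  set m₂ := ∫ z, h z ∂μ₂
  have hintegr : ∀ (μ : Measure H), IsProbabilityMeasure μ → ∀ c : H,
      Integrable (fun x => ⟪h x, c⟫) μ := by
    intro μ hμ c
    exact (hint μ hμ).inner_const c
  have hsplit : ∀ (μ : Measure H), IsProbabilityMeasure μ →
      ∫ x, (⟪h x, G m₁⟫ - ⟪h x, G m₂⟫) ∂μ = ⟪∫ z, h z ∂μ, G m₁⟫ - ⟪∫ z, h z ∂μ, G m₂⟫ := by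
    intro μ hμ
    rw [integral_sub (hintegr μ hμ _) (hintegr μ hμ _), key μ hμ, key μ hμ]
  have heq : ((∫ x, (⟪h x, G m₁⟫ - ⟪h x, G m₂⟫) ∂μ₁)
        - ∫ x, (⟪h x, G m₁⟫ - ⟪h x, G m₂⟫) ∂μ₂)
      = ⟪m₁ - m₂, G m₁ - G m₂⟫ := by
    rw [hsplit μ₁ hμ₁, hsplit μ₂ hμ₂]
    simp only [inner_sub_left, inner_sub_right]
    ring
  have hpos : 0 ≤ ⟪m₁ - m₂, G m₁ - G m₂⟫ := by
    rw [real_inner_comm]; exact hG_mono m₁ m₂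
  refine ⟨heq, hpos, fun hstrict hzero => ?_⟩
  have : ⟪G m₁ - G m₂, m₁ - m₂⟫ = 0 := by
    rw [real_inner_comm]; rw [heq] at hzero; exact hzero
  have hm : m₁ = m₂ := hstrict m₁ m₂ this
  exact ⟨hm, fun x => by rw [hm]⟩
end

section
/- Let ℓ : H × [0,∞) → ℝ be bounded with ℓ(x,·) strictly increasing for each x, let ρ : H → [0,∞) be bounded, and ν a positive finite measure on H with full support. Define F(x,μ) := ∫_H ℓ(z, (ρ∗μ)(z)) ρ(z−x) ν(dz), where (ρ∗μ)(z) := ∫ ρ(z−u) dμ(u). Then for all μ₁, μ₂ ∈ P₁(H): ∫_H [F(x,μ₁) − F(x,μ₂)] d(μ₁−μ₂)(x) ≥ 0. -/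
open MeasureTheory

variable {H : Type*} [NormedAddCommGroup H] [InnerProductSpace ℝ H] [CompleteSpace H]
  [SecondCountableTopology H] [MeasurableSpace H] [BorelSpace H]

/-- The convolution `(ρ∗μ)(z) := ∫ ρ(z−u) dμ(u)`. -/
noncomputable def convMeas (ρ : H → ℝ) (μ : Measure H) (z : H) : ℝ :=
  ∫ u, ρ (z - u) ∂μ

/-- The coupling term `F(x,μ) := ∫ ℓ(z, (ρ∗μ)(z)) ρ(z−x) ν(dz)`. -/
noncomputable def Fconv (ℓ : H → ℝ → ℝ) (ρ : H → ℝ) (ν : Measure H)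
    (μ : Measure H) (x : H) : ℝ :=
  ∫ z, ℓ z (convMeas ρ μ z) * ρ (z - x) ∂ν

lemma convMeas_nonneg (ρ : H → ℝ) (hρ : ∀ x, 0 ≤ ρ x) (μ : Measure H) (z : H) :
    0 ≤ convMeas ρ μ z :=
  integral_nonneg fun _ => hρ _

lemma shift_integrable (ρ : H → ℝ) (hρ_cont : Continuous ρ) {M : ℝ}
    (hρ_nonneg : ∀ x, 0 ≤ ρ x) (hρ_bdd : ∀ x, ρ x ≤ M)
    (μ : Measure H) [IsFiniteMeasure μ] (z : H) :
    Integrable (fun u => ρ (z - u)) μ := by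
  refine (integrable_const M).mono'
    ((hρ_cont.comp (continuous_const.sub continuous_id)).aestronglyMeasurable) ?_
  filter_upwards with u
  rw [Real.norm_eq_abs, abs_of_nonneg (hρ_nonneg _)]
  exact hρ_bdd _

lemma convMeas_le (ρ : H → ℝ) (hρ_cont : Continuous ρ) {M : ℝ}
    (hρ_nonneg : ∀ x, 0 ≤ ρ x) (hρ_bdd : ∀ x, ρ x ≤ M)
    (μ : Measure H) [IsProbabilityMeasure μ] (z : H) :
    convMeas ρ μ z ≤ M := by
  rw [convMeas]
  calc ∫ u, ρ (z - u) ∂μ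
      ≤ ∫ _, M ∂μ := integral_mono
        (shift_integrable ρ hρ_cont hρ_nonneg hρ_bdd μ z) (integrable_const M)
        fun u => hρ_bdd _
    _ = M := by simp

lemma convMeas_continuous (ρ : H → ℝ) (hρ_cont : Continuous ρ) {M : ℝ}
    (hρ_nonneg : ∀ x, 0 ≤ ρ x) (hρ_bdd : ∀ x, ρ x ≤ M)
    (μ : Measure H) [IsFiniteMeasure μ] : Continuous (convMeas ρ μ) := by
  apply continuous_of_dominated (bound := fun _ => M)
  · intro z
    exact (hρ_cont.comp (continuous_const.sub continuous_id)).aestronglyMeasurable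
  · intro z
    filter_upwards with u
    rw [Real.norm_eq_abs, abs_of_nonneg (hρ_nonneg _)]
    exact hρ_bdd _
  · exact integrable_const M
  · filter_upwards with u
    exact hρ_cont.comp (continuous_id.sub continuous_const)

/-- Let `ℓ : H × [0,∞) → ℝ` be bounded (and continuous) with `ℓ(x,·)`
strictly increasing for each `x`, let `ρ : H → [0,∞)` be bounded (and continuous), and `ν` a
positive finite measure on `H` with full support. Define
`F(x,μ) := ∫ ℓ(z,(ρ∗μ)(z)) ρ(z−x) ν(dz)`. Then for all `μ₁, μ₂ ∈ P₁(H)`: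
`∫ [F(x,μ₁) − F(x,μ₂)] d(μ₁−μ₂)(x) ≥ 0`. -/
theorem statement_13
    (ℓ : H → ℝ → ℝ)
    (hℓ_bdd : ∃ M : ℝ, ∀ z r, |ℓ z r| ≤ M)
    (hℓ_cont : Continuous fun p : H × ℝ => ℓ p.1 p.2)
    (hℓ_mono : ∀ z : H, StrictMonoOn (ℓ z) (Set.Ici (0 : ℝ)))
    (ρ : H → ℝ)
    (hρ_nonneg : ∀ x, 0 ≤ ρ x)
    (hρ_bdd : ∃ M : ℝ, ∀ x, ρ x ≤ M)
    (hρ_cont : Continuous ρ)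
    (ν : Measure H) [IsFiniteMeasure ν]
    (hν_supp : ∀ D : Set H, IsOpen D → D.Nonempty → 0 < ν D)
    (μ₁ μ₂ : Measure H)
    (hμ₁ : IsProbabilityMeasure μ₁) (hμ₂ : IsProbabilityMeasure μ₂)
    (hμ₁1 : Integrable (fun x : H => ‖x‖) μ₁)
    (hμ₂1 : Integrable (fun x : H => ‖x‖) μ₂) :
    0 ≤ (∫ x, (Fconv ℓ ρ ν μ₁ x - Fconv ℓ ρ ν μ₂ x) ∂μ₁)
        - ∫ x, (Fconv ℓ ρ ν μ₁ x - Fconv ℓ ρ ν μ₂ x) ∂μ₂ := by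
  obtain ⟨Mℓ, hMℓ⟩ := hℓ_bdd
  obtain ⟨Mρ, hMρ⟩ := hρ_bdd
  have hMρ0 : 0 ≤ Mρ := le_trans (hρ_nonneg 0) (hMρ 0)
  have hMℓ0 : 0 ≤ Mℓ := (abs_nonneg _).trans (hMℓ 0 0)
  set c₁ := convMeas ρ μ₁ with hc₁def
  set c₂ := convMeas ρ μ₂ with hc₂def
  have hc₁c : Continuous c₁ := convMeas_continuous ρ hρ_cont hρ_nonneg hMρ μ₁
  have hc₂c : Continuous c₂ := convMeas_continuous ρ hρ_cont hρ_nonneg hMρ μ₂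
  set g : H → ℝ := fun z => ℓ z (c₁ z) - ℓ z (c₂ z) with hgdef
  have hgc : Continuous g :=
    (hℓ_cont.comp (continuous_id.prodMk hc₁c)).sub
      (hℓ_cont.comp (continuous_id.prodMk hc₂c))
  have hgbd : ∀ z, |g z| ≤ 2 * Mℓ := by
    intro z
    calc |g z| ≤ |ℓ z (c₁ z)| + |ℓ z (c₂ z)| := abs_sub _ _
      _ ≤ Mℓ + Mℓ := add_le_add (hMℓ _ _) (hMℓ _ _)
      _ = 2 * Mℓ := by ring
  -- integrability of the inner integrands over ν
  have hintℓ : ∀ (c : H → ℝ), Continuous c → ∀ x : H,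
      Integrable (fun z => ℓ z (c z) * ρ (z - x)) ν := by
    intro c hc x
    refine (integrable_const (Mℓ * Mρ)).mono'
      (((hℓ_cont.comp (continuous_id.prodMk hc)).mul
        (hρ_cont.comp (continuous_id.sub continuous_const))).aestronglyMeasurable) ?_
    filter_upwards with z
    rw [Real.norm_eq_abs, abs_mul]
    exact mul_le_mul (hMℓ _ _)
      (by rw [abs_of_nonneg (hρ_nonneg _)]; exact hMρ _) (abs_nonneg _) hMℓ0
  have hFdiff : ∀ x, Fconv ℓ ρ ν μ₁ x - Fconv ℓ ρ ν μ₂ x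
      = ∫ z, g z * ρ (z - x) ∂ν := by
    intro x
    rw [Fconv, Fconv, ← integral_sub (hintℓ c₁ hc₁c x) (hintℓ c₂ hc₂c x)]
    congr 1; ext z; rw [hgdef]; ring
  simp only [hFdiff]
  -- swap the order of integration
  have hswap : ∀ (μ : Measure H) (_ : IsProbabilityMeasure μ),
      ∫ x, ∫ z, g z * ρ (z - x) ∂ν ∂μ = ∫ z, g z * convMeas ρ μ z ∂ν := by
    intro μ hμ
    have hint : Integrable (Function.uncurry fun x z => g z * ρ (z - x)) (μ.prod ν) := by
      refine (integrable_const (2 * Mℓ * Mρ)).mono'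
        (((hgc.comp continuous_snd).mul
          (hρ_cont.comp (continuous_snd.sub continuous_fst))).aestronglyMeasurable) ?_
      filter_upwards with p
      simp only [Function.uncurry, Real.norm_eq_abs, abs_mul]
      exact mul_le_mul (hgbd _)
        (by rw [abs_of_nonneg (hρ_nonneg _)]; exact hMρ _) (abs_nonneg _)
        (by positivity)
    rw [integral_integral_swap hint]
    congr 1; ext z
    rw [convMeas, integral_const_mul]
  have hc_int : ∀ (c : H → ℝ), Continuous c → (∀ z, |c z| ≤ Mρ) →
      Integrable (fun z => g z * c z) ν := by
    intro c hc hcb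
    refine (integrable_const (2 * Mℓ * Mρ)).mono'
      ((hgc.mul hc).aestronglyMeasurable) ?_
    filter_upwards with z
    rw [Real.norm_eq_abs, abs_mul]
    exact mul_le_mul (hgbd _) (hcb _) (abs_nonneg _) (by positivity)
  have hc₁b : ∀ z, |c₁ z| ≤ Mρ := fun z => by
    rw [abs_of_nonneg (convMeas_nonneg ρ hρ_nonneg μ₁ z)]
    exact convMeas_le ρ hρ_cont hρ_nonneg hMρ μ₁ z
  have hc₂b : ∀ z, |c₂ z| ≤ Mρ := fun z => by
    rw [abs_of_nonneg (convMeas_nonneg ρ hρ_nonneg μ₂ z)]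
    exact convMeas_le ρ hρ_cont hρ_nonneg hMρ μ₂ z
  rw [hswap μ₁ hμ₁, hswap μ₂ hμ₂,
    ← integral_sub (hc_int c₁ hc₁c hc₁b) (hc_int c₂ hc₂c hc₂b)]
  apply integral_nonneg
  intro z
  have h1 : (0:ℝ) ≤ c₁ z := convMeas_nonneg ρ hρ_nonneg μ₁ z
  have h2 : (0:ℝ) ≤ c₂ z := convMeas_nonneg ρ hρ_nonneg μ₂ z
  have heq : g z * c₁ z - g z * c₂ z = g z * (c₁ z - c₂ z) := by ring
  simp only [Pi.zero_apply, heq]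
  rcases le_total (c₁ z) (c₂ z) with h | h
  · have hg : g z ≤ 0 := sub_nonpos.2 ((hℓ_mono z).monotoneOn h1 h2 h)
    nlinarith [sub_nonpos.2 h, hg]
  · have hg : 0 ≤ g z := sub_nonneg.2 ((hℓ_mono z).monotoneOn h2 h1 h)
    exact mul_nonneg hg (sub_nonneg.2 h)
end

section
/- Let A be maximal dissipative on H with Yosida approximations A_n = nA(nI − A)^{-1}, and suppose B is compact, self-adjoint, strictly positive with ‖e^{tA}x‖₋₁ + ‖e^{tA_n}x‖₋₁ ≤ C(T)‖x‖₋₁ for all x ∈ H, t ∈ [0,T], n. Then lim_{n→∞} sup{ ‖e^{tA}x − e^{tA_n}x‖₋₁ : t ∈ [0,T], x ∈ H, ‖x‖ ≤ 1 } = 0, i.e., the Yosida semigroups converge to e^{tA} in the ‖·‖₋₁ norm uniformly on the unit ball of H and in t ∈ [0,T]. -/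
open Filter
open scoped Topology

/-- Let `A` be maximal dissipative on `H`, generating the contraction
semigroup `e^{tA}`, with Yosida approximations `A_n` generating the semigroups `e^{tA_n}`
(`e^{tA_n}x → e^{tA}x` for each `x`, uniformly for `t` in compact intervals — the standard
Yosida approximation property). Suppose `B` is compact (realized through its compact square
root `S = B^{1/2}`, `‖x‖₋₁ = ‖S x‖`) and `‖e^{tA}x‖₋₁ + ‖e^{tA_n}x‖₋₁ ≤ C‖x‖₋₁` for all
`x ∈ H`, `t ∈ [0,T₀]`, `n`. Then
`lim_{n→∞} sup{‖e^{tA}x − e^{tA_n}x‖₋₁ : t ∈ [0,T₀], ‖x‖ ≤ 1} = 0`: the Yosida semigroups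
converge to `e^{tA}` in the `‖·‖₋₁`-norm, uniformly on the unit ball of `H` and in
`t ∈ [0,T₀]`. -/
theorem statement_17
    {H : Type*} [NormedAddCommGroup H] [InnerProductSpace ℝ H] [CompleteSpace H]
    -- `S = B^{1/2}` compact, realizing the `H₋₁` norm `‖x‖₋₁ = ‖S x‖`
    (S : H →L[ℝ] H) (hS_compact : IsCompactOperator ⇑S)
    (T₀ : ℝ) (hT₀ : 0 ≤ T₀)
    -- `T t = e^{tA}` and `Tn n t = e^{tA_n}`
    (T : ℝ → H →L[ℝ] H) (Tn : ℕ → ℝ → H →L[ℝ] H)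
    -- contraction semigroups
    (hT_contr : ∀ t ∈ Set.Icc (0 : ℝ) T₀, ∀ x : H, ‖T t x‖ ≤ ‖x‖)
    (hTn_contr : ∀ n, ∀ t ∈ Set.Icc (0 : ℝ) T₀, ∀ x : H, ‖Tn n t x‖ ≤ ‖x‖)
    -- strong continuity of `t ↦ e^{tA} x`
    (hT_cont : ∀ x : H, ContinuousOn (fun t => T t x) (Set.Icc (0 : ℝ) T₀))
    -- the uniform `‖·‖₋₁` bound: `‖e^{tA}x‖₋₁ + ‖e^{tA_n}x‖₋₁ ≤ C ‖x‖₋₁`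
    (C : ℝ)
    (hbound : ∀ t ∈ Set.Icc (0 : ℝ) T₀, ∀ n, ∀ x : H,
      ‖S (T t x)‖ + ‖S (Tn n t x)‖ ≤ C * ‖S x‖)
    -- the standard Yosida approximation property: for each fixed `x`,
    -- `e^{tA_n}x → e^{tA}x` in `H`, uniformly for `t ∈ [0,T₀]`
    (hconv : ∀ x : H, ∀ ε : ℝ, 0 < ε → ∃ N : ℕ, ∀ n, N ≤ n →
      ∀ t ∈ Set.Icc (0 : ℝ) T₀, ‖Tn n t x - T t x‖ < ε) :
    ∀ ε : ℝ, 0 < ε → ∃ N : ℕ, ∀ n, N ≤ n → ∀ t ∈ Set.Icc (0 : ℝ) T₀,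
      ∀ x : H, ‖x‖ ≤ 1 → ‖S (T t x - Tn n t x)‖ < ε := by
  intro ε hε
  set C' : ℝ := max C 1 with hC'def
  have hC'1 : (1 : ℝ) ≤ C' := le_max_right _ _
  have hC'0 : (0 : ℝ) < C' := lt_of_lt_of_le one_pos hC'1
  -- equicontinuity bound with positive constant
  have hbound' : ∀ t ∈ Set.Icc (0 : ℝ) T₀, ∀ n, ∀ x : H,
      ‖S (T t x)‖ + ‖S (Tn n t x)‖ ≤ C' * ‖S x‖ := by
    intro t ht n x
    refine (hbound t ht n x).trans ?_
    exact mul_le_mul_of_nonneg_right (le_max_left _ _) (norm_nonneg _)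
  -- total boundedness of S '' closedBall 0 1
  obtain ⟨K, hK, hsub⟩ :=
    IsCompactOperator.image_closedBall_subset_compact (𝕜₁ := ℝ)
      (f := (S : H →ₗ[ℝ] H)) hS_compact 1
  have htb : TotallyBounded ((⇑S) '' Metric.closedBall (0 : H) 1) :=
    hK.totallyBounded.subset hsub
  set δ : ℝ := ε / (3 * C') with hδdef
  have hδ0 : 0 < δ := by positivity
  obtain ⟨t0, ht0sub, ht0fin, ht0cov⟩ :=
    Metric.finite_approx_of_totallyBounded htb δ hδ0
  -- for each center y ∈ t0 pick a preimage and an N from hconv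
  have hchoice : ∀ y ∈ t0, ∃ N : ℕ, ∃ x : H, S x = y ∧ ∀ n, N ≤ n →
      ∀ t ∈ Set.Icc (0 : ℝ) T₀, ‖Tn n t x - T t x‖ < ε / (3 * (‖S‖ + 1)) := by
    intro y hy
    obtain ⟨x, -, hx⟩ := ht0sub hy
    obtain ⟨N, hN⟩ := hconv x (ε / (3 * (‖S‖ + 1))) (by positivity)
    exact ⟨N, x, hx, hN⟩
  choose! Nf xf hxf hNf using hchoice
  obtain ⟨N, hN⟩ : ∃ N : ℕ, ∀ y ∈ t0, Nf y ≤ N := by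
    obtain ⟨N, hN⟩ := (ht0fin.image Nf).bddAbove
    exact ⟨N, fun y hy => hN (Set.mem_image_of_mem Nf hy)⟩
  refine ⟨N, fun n hn t ht x hx => ?_⟩
  -- find a nearby center
  have hSx : S x ∈ ⋃ y ∈ t0, Metric.ball y δ :=
    ht0cov ⟨x, Metric.mem_closedBall.2 (by simpa using hx), rfl⟩
  simp only [Set.mem_iUnion] at hSx
  obtain ⟨y, hy, hball⟩ := hSx
  set z : H := xf y with hz
  have hSz : S z = y := hxf y hy
  have h1 : ‖S (T t (x - z))‖ + ‖S (Tn n t (x - z))‖ < ε / 3 := by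
    refine lt_of_le_of_lt (hbound' t ht n (x - z)) ?_
    have : ‖S (x - z)‖ < δ := by
      rw [map_sub, hSz]
      simpa [dist_eq_norm] using hball
    calc C' * ‖S (x - z)‖ < C' * δ := by
          exact (mul_lt_mul_iff_right₀ hC'0).2 this
      _ = ε / 3 := by
          rw [hδdef]; field_simp
  have h2 : ‖S (T t z - Tn n t z)‖ < ε / 3 := by
    have hlt : ‖Tn n t z - T t z‖ < ε / (3 * (‖S‖ + 1)) :=
      hNf y hy n (le_trans (hN y hy) hn) t ht
    calc ‖S (T t z - Tn n t z)‖ ≤ ‖S‖ * ‖T t z - Tn n t z‖ := S.le_opNorm _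
      _ = ‖S‖ * ‖Tn n t z - T t z‖ := by rw [norm_sub_rev]
      _ ≤ (‖S‖ + 1) * ‖Tn n t z - T t z‖ := by
          exact mul_le_mul_of_nonneg_right (by linarith) (norm_nonneg _)
      _ < (‖S‖ + 1) * (ε / (3 * (‖S‖ + 1))) := by
          refine (mul_lt_mul_iff_right₀ (by positivity)).2 ?_
          exact lt_of_le_of_lt (le_of_eq rfl) hlt
      _ = ε / 3 := by field_simp
  have hdecomp : S (T t x - Tn n t x)
      = S (T t (x - z)) - S (Tn n t (x - z)) + S (T t z - Tn n t z) := by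
    simp only [map_sub]
    abel
  calc ‖S (T t x - Tn n t x)‖
      ≤ ‖S (T t (x - z)) - S (Tn n t (x - z))‖ + ‖S (T t z - Tn n t z)‖ := by
        rw [hdecomp]; exact norm_add_le _ _
    _ ≤ (‖S (T t (x - z))‖ + ‖S (Tn n t (x - z))‖) + ‖S (T t z - Tn n t z)‖ := by
        gcongr; exact norm_sub_le _ _
    _ < ε / 3 + ε / 3 := by exact add_lt_add h1 h2
    _ < ε := by linarith
end
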